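/- Under the assumptions of the fourth-order Dirichlet boundary control problem on a convex polygonal domain, the unique minimizer q ∈ Q, together with the optimal state u = u_f + q and a unique adjoint state φ ∈ H²₀(Ω), satisfies the KKT system: a(u_f, v) = (f, v) − a(q, v) for all v ∈ H²₀(Ω); a(φ, v) = (u − u_d, v) for all v ∈ H²₀(Ω); and α a(q, p) = a(p, φ) − (u − u_d, p) for all p ∈ Q. -/

import Mathlib

/-!
The state equation is solved by `S p = S 0 + T p`, where `T` is the continuous linear solution
operator of `a(T p, v) = -a(p, v)` on `V`. With `L = ι ∘ (id + T)` and `b = u_d - ι (S 0)` the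
reduced cost becomes the quadratic functional `½ B(p, p) - ⟪b, L p⟫ + ½ ‖b‖²` for
`B = ⟪L ·, L ·⟫ + α a`. Since `a(T p, T p) ≤ a(p, p)` and `a + ‖ι ·‖²` is coercive on `Q`, the form
`B` is coercive, so by Lax–Milgram the reduced cost has a unique minimizer `q`, characterized by
`B(q, ·) = ⟪b, L ·⟫`. The adjoint state is the Lax–Milgram solution on `V` with right-hand side
`⟪u - u_d, ι ·⟫`, and `a(T p, φ) = -a(p, φ)` turns the Euler equation of `q` into the third
KKT equation.
-/

open RealInnerProductSpace InnerProductSpace ContinuousLinearMap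

section BilinearForm

variable {E : Type*} [NormedAddCommGroup E] [InnerProductSpace ℝ E] {B : E →L[ℝ] E →L[ℝ] ℝ}

theorem isCoercive_iff_exists_mul_sq_le : IsCoercive B ↔ ∃ c > 0, ∀ u, c * ‖u‖ ^ 2 ≤ B u u := by
  simp only [IsCoercive, sq, mul_assoc, gt_iff_lt]

theorem apply_sub_self_eq_of_symm (hsymm : ∀ u v, B u v = B v u) (u p : E) :
    B (p - u) (p - u) = B p p - 2 * B u p + B u u := by
  simp only [map_sub, sub_apply, hsymm p u]
  ring

namespace IsCoercive

theorem apply_self_nonneg (hB : IsCoercive B) (u : E) : 0 ≤ B u u := by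
  obtain ⟨c, hc, hcB⟩ := isCoercive_iff_exists_mul_sq_le.mp hB
  exact (hcB u).trans' (by positivity)

theorem eq_zero_of_apply_self_nonpos (hB : IsCoercive B) {u : E} (hu : B u u ≤ 0) : u = 0 := by
  obtain ⟨c, hc, hcB⟩ := isCoercive_iff_exists_mul_sq_le.mp hB
  have : c * ‖u‖ ^ 2 ≤ 0 := (hcB u).trans hu
  simpa [hc.ne'] using le_antisymm (nonpos_of_mul_nonpos_right this hc) (sq_nonneg _)

theorem exists_forall_apply_eq [CompleteSpace E] (hB : IsCoercive B) (ℓ : E →L[ℝ] ℝ) :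
    ∃ u, ∀ w, B u w = ℓ w := by
  refine ⟨hB.continuousLinearEquivOfBilin.symm ((toDual ℝ E).symm ℓ), fun w => ?_⟩
  rw [← hB.continuousLinearEquivOfBilin_apply, ContinuousLinearEquiv.apply_symm_apply,
    toDual_symm_apply]

theorem exists_unique_minimizer [CompleteSpace E] (hB : IsCoercive B)
    (hsymm : ∀ u v, B u v = B v u) (ℓ : E →L[ℝ] ℝ) {J : E → ℝ} {C : ℝ}
    (hJ : ∀ u, J u = B u u / 2 - ℓ u + C) :
    ∃ u, (∀ w, B u w = ℓ w) ∧ (∀ p, J u ≤ J p) ∧ ∀ u', (∀ p, J u' ≤ J p) → u' = u := by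
  obtain ⟨u, hu⟩ := hB.exists_forall_apply_eq ℓ
  have hJsub : ∀ p, J p - J u = B (p - u) (p - u) / 2 := fun p => by
    rw [hJ, hJ, apply_sub_self_eq_of_symm hsymm, hu, hu]
    ring
  have hmin : ∀ p, J u ≤ J p := fun p => by
    linarith [hJsub p, hB.apply_self_nonneg (p - u)]
  refine ⟨u, hu, hmin, fun u' hu' => sub_eq_zero.mp (hB.eq_zero_of_apply_self_nonpos ?_)⟩
  linarith [hJsub u', hu' u]

end IsCoercive

end BilinearForm

section Subspace

variable {E : Type*} [NormedAddCommGroup E] [InnerProductSpace ℝ E]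
  {a : E →L[ℝ] E →L[ℝ] ℝ} {V : Submodule ℝ E}

theorem isCoercive_bilinearComp_subtypeL (ha : ∃ c > 0, ∀ v ∈ V, c * ‖v‖ ^ 2 ≤ a v v) :
    IsCoercive (a.bilinearComp V.subtypeL V.subtypeL) := by
  obtain ⟨c, hc, hca⟩ := ha
  exact isCoercive_iff_exists_mul_sq_le.mpr ⟨c, hc, fun v => hca v v.2⟩

theorem eq_of_forall_apply_eq_of_mem (ha : ∃ c > 0, ∀ v ∈ V, c * ‖v‖ ^ 2 ≤ a v v) {u u' : E}
    (hu : u ∈ V) (hu' : u' ∈ V) (h : ∀ v ∈ V, a u v = a u' v) : u = u' := by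
  have hsub : u - u' ∈ V := V.sub_mem hu hu'
  have := (isCoercive_bilinearComp_subtypeL ha).eq_zero_of_apply_self_nonpos
    (u := ⟨u - u', hsub⟩) (by simp [h _ hsub])
  simpa [sub_eq_zero] using congrArg Subtype.val this

theorem exists_mem_forall_apply_eq [CompleteSpace V]
    (ha : ∃ c > 0, ∀ v ∈ V, c * ‖v‖ ^ 2 ≤ a v v) (ℓ : E →L[ℝ] ℝ) :
    ∃ u ∈ V, ∀ v ∈ V, a u v = ℓ v := by
  obtain ⟨u, hu⟩ :=
    (isCoercive_bilinearComp_subtypeL ha).exists_forall_apply_eq (ℓ ∘L V.subtypeL)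
  exact ⟨u, u.2, fun v hv => hu ⟨v, hv⟩⟩

theorem exists_forall_mem_and_forall_apply_eq [CompleteSpace E] [CompleteSpace V]
    (ha : ∃ c > 0, ∀ v ∈ V, c * ‖v‖ ^ 2 ≤ a v v) (b : E →L[ℝ] E →L[ℝ] ℝ) :
    ∃ T : E →L[ℝ] E, (∀ p, T p ∈ V) ∧ ∀ p, ∀ v ∈ V, a (T p) v = b p v := by
  have hB := isCoercive_bilinearComp_subtypeL ha
  set A := hB.continuousLinearEquivOfBilin
  refine ⟨V.subtypeL ∘L (A.symm : V →L[ℝ] V) ∘L V.orthogonalProjectionOnto ∘L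
    continuousLinearMapOfBilin b, fun p => Submodule.coe_mem _, fun p v hv => ?_⟩
  set x := V.orthogonalProjectionOnto (continuousLinearMapOfBilin b p)
  calc a (A.symm x) v = ⟪A (A.symm x), ⟨v, hv⟩⟫ :=
      (hB.continuousLinearEquivOfBilin_apply (A.symm x) ⟨v, hv⟩).symm
    _ = b p v := by
      rw [A.apply_symm_apply, Submodule.inner_orthogonalProjectionOnto_eq_of_mem_right,
        continuousLinearMapOfBilin_apply]

theorem exists_mul_norm_sq_le_of_forall_apply_eq_neg (hsymm : ∀ p q, a p q = a q p)
    (hpos : ∀ p, 0 ≤ a p p) (ha : ∃ c > 0, ∀ v ∈ V, c * ‖v‖ ^ 2 ≤ a v v) {T : E → E}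
    (hTV : ∀ p, T p ∈ V) (hTa : ∀ p, ∀ v ∈ V, a (T p) v = -a p v) :
    ∃ c > 0, ∀ p, c * ‖T p‖ ^ 2 ≤ a p p := by
  obtain ⟨c, hc, hca⟩ := ha
  refine ⟨c, hc, fun p => (hca _ (hTV p)).trans ?_⟩
  -- `0 ≤ a(T p + p, T p + p) = a(p, p) - a(T p, T p)`
  have hTT := hTa p _ (hTV p)
  have := hpos (T p + p)
  simp only [map_add, add_apply, hsymm (T p) p] at this
  linarith

end Subspace

section GramForm

variable {E F : Type*} [NormedAddCommGroup E] [InnerProductSpace ℝ E]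
  [NormedAddCommGroup F] [InnerProductSpace ℝ F]

noncomputable def gramForm (L : E →L[ℝ] F) : E →L[ℝ] E →L[ℝ] ℝ :=
  (innerSL ℝ (E := F)).bilinearComp L L

@[simp]
theorem gramForm_apply (L : E →L[ℝ] F) (u v : E) : gramForm L u v = ⟪L u, L v⟫ := rfl

theorem gramForm_symm (L : E →L[ℝ] F) (u v : E) : gramForm L u v = gramForm L v u :=
  real_inner_comm _ _

theorem half_norm_sub_sq_add_eq (L : E →L[ℝ] F) (a : E →L[ℝ] E →L[ℝ] ℝ) (α : ℝ) (b : F) (p : E) :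
    1 / 2 * ‖L p - b‖ ^ 2 + α / 2 * a p p =
      (gramForm L + α • a) p p / 2 - (innerSL ℝ b ∘L L) p + ‖b‖ ^ 2 / 2 := by
  simp only [norm_sub_sq_real, add_apply, smul_apply, gramForm_apply, comp_apply,
    innerSL_apply_apply, real_inner_self_eq_norm_sq, smul_eq_mul, real_inner_comm b]
  ring

theorem isCoercive_gramForm_add_smul {a : E →L[ℝ] E →L[ℝ] ℝ} (hpos : ∀ p, 0 ≤ a p p)
    {ι : E →L[ℝ] F} (hnorm : ∃ c > 0, ∀ p, c * ‖p‖ ^ 2 ≤ a p p + ‖ι p‖ ^ 2)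
    {T : E →L[ℝ] E} (hT : ∃ c > 0, ∀ p, c * ‖T p‖ ^ 2 ≤ a p p) {α : ℝ} (hα : 0 < α) :
    IsCoercive (gramForm (ι ∘L (ContinuousLinearMap.id ℝ E + T)) + α • a) := by
  obtain ⟨c₁, hc₁, hnorm⟩ := hnorm
  obtain ⟨c₀, hc₀, hT⟩ := hT
  have hι : ∀ p, ‖ι p‖ ^ 2 ≤ 2 * ‖ι (p + T p)‖ ^ 2 + 2 * ‖ι‖ ^ 2 / c₀ * a p p := fun p => by
    have h1 : ‖ι p‖ ≤ ‖ι (p + T p)‖ + ‖ι‖ * ‖T p‖ :=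
      calc ‖ι p‖ = ‖ι (p + T p) - ι (T p)‖ := by rw [map_add, add_sub_cancel_right]
        _ ≤ ‖ι (p + T p)‖ + ‖ι‖ * ‖T p‖ := (norm_sub_le _ _).trans (by gcongr; exact ι.le_opNorm _)
    have h2 : ‖ι‖ ^ 2 * ‖T p‖ ^ 2 ≤ ‖ι‖ ^ 2 / c₀ * a p p := by
      rw [div_mul_eq_mul_div, le_div_iff₀ hc₀]
      nlinarith [hT p, sq_nonneg ‖ι‖]
    have h3 := pow_le_pow_left₀ (norm_nonneg _) h1 2
    have h4 : (‖ι (p + T p)‖ + ‖ι‖ * ‖T p‖) ^ 2 ≤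
        2 * ‖ι (p + T p)‖ ^ 2 + 2 * (‖ι‖ ^ 2 * ‖T p‖ ^ 2) := by
      rw [← mul_pow]
      nlinarith [sq_nonneg (‖ι (p + T p)‖ - ‖ι‖ * ‖T p‖)]
    linear_combination h3 + h4 + 2 * h2
  set M := 1 + 2 * ‖ι‖ ^ 2 / c₀
  refine isCoercive_iff_exists_mul_sq_le.mpr ⟨c₁ / (2 + M / α), by positivity, fun p => ?_⟩
  have hK : 2 * ‖ι (p + T p)‖ ^ 2 + M * a p p ≤
      (2 + M / α) * (‖ι (p + T p)‖ ^ 2 + α * a p p) := by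
    have hrest : 0 ≤ M / α * ‖ι (p + T p)‖ ^ 2 + 2 * α * a p p := by
      have := hpos p
      positivity
    have hsplit : (2 + M / α) * (‖ι (p + T p)‖ ^ 2 + α * a p p) =
        2 * ‖ι (p + T p)‖ ^ 2 + M * a p p + (M / α * ‖ι (p + T p)‖ ^ 2 + 2 * α * a p p) := by
      field_simp
      ring
    linarith
  rw [div_mul_eq_mul_div, div_le_iff₀ (by positivity)]
  simp only [add_apply, gramForm_apply, smul_apply, comp_apply, id_apply, smul_eq_mul,
    real_inner_self_eq_norm_sq]
  nlinarith [hnorm p, hι p]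

end GramForm

theorem KKT_optimality_system_general
    {Q F : Type*} [NormedAddCommGroup Q] [InnerProductSpace ℝ Q] [CompleteSpace Q]
    [NormedAddCommGroup F] [InnerProductSpace ℝ F]
    (V : Submodule ℝ Q) (hVclosed : IsClosed (V : Set Q))
    (ι : Q →L[ℝ] F)
    (a : Q →L[ℝ] Q →L[ℝ] ℝ)
    (hsymm : ∀ p q : Q, a p q = a q p)
    (hpos : ∀ p : Q, 0 ≤ a p p)
    (hcoer : ∃ c > 0, ∀ v ∈ V, c * ‖v‖^2 ≤ a v v)
    (hnorm : ∃ c > 0, ∀ p : Q, c * ‖p‖^2 ≤ a p p + ‖ι p‖^2)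
    (f ud : F) (α : ℝ) (hα : 0 < α)
    (S : Q → Q) (hSV : ∀ p, S p ∈ V)
    (hS : ∀ p : Q, ∀ v ∈ V, a (S p) v = (inner ℝ f (ι v) : ℝ) - a p v)
    (j : Q → ℝ)
    (hj : ∀ p : Q, j p = (1/2) * ‖ι (S p + p) - ud‖^2 + (α/2) * a p p) :
    ∃ (q uf φ : Q),
      (∀ p : Q, j q ≤ j p) ∧ (∀ q' : Q, (∀ p : Q, j q' ≤ j p) → q' = q) ∧
      uf ∈ V ∧ φ ∈ V ∧
      (∀ v ∈ V, a uf v = (inner ℝ f (ι v) : ℝ) - a q v) ∧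
      (∀ v ∈ V, a φ v = (inner ℝ (ι (uf + q) - ud) (ι v) : ℝ)) ∧
      (∀ p : Q, α * a q p = a p φ - (inner ℝ (ι (uf + q) - ud) (ι p) : ℝ)) ∧
      (∀ uf' φ' : Q, uf' ∈ V → φ' ∈ V →
        (∀ v ∈ V, a uf' v = (inner ℝ f (ι v) : ℝ) - a q v) →
        (∀ v ∈ V, a φ' v = (inner ℝ (ι (uf' + q) - ud) (ι v) : ℝ)) →
        uf' = uf ∧ φ' = φ) := by
  have : CompleteSpace V := hVclosed.completeSpace_coe
  obtain ⟨T, hTV, hTa⟩ := exists_forall_mem_and_forall_apply_eq hcoer (-a)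
  simp only [neg_apply] at hTa
  set L := ι ∘L (ContinuousLinearMap.id ℝ Q + T)
  set b := ud - ι (S 0)
  have hres : ∀ p, ι (S p + p) - ud = L p - b := fun p => by
    have hST : S p = S 0 + T p :=
      eq_of_forall_apply_eq_of_mem hcoer (hSV p) (V.add_mem (hSV 0) (hTV p)) fun v hv => by
        simp [hS _ v hv, hTa p v hv, sub_eq_add_neg]
    simp only [hST, L, b, comp_apply, add_apply, id_apply, map_add]
    abel
  have hB : IsCoercive (gramForm L + α • a) := isCoercive_gramForm_add_smul hpos hnorm
    (exists_mul_norm_sq_le_of_forall_apply_eq_neg hsymm hpos hcoer hTV hTa) hα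
  obtain ⟨q, hqB, hmin, huniq⟩ := hB.exists_unique_minimizer
    (fun u v => by simp only [add_apply, smul_apply, gramForm_symm L u, hsymm u])
    (innerSL ℝ b ∘L L) (J := j) (C := ‖b‖ ^ 2 / 2)
    fun p => by rw [hj, hres, half_norm_sub_sq_add_eq]
  set e := ι (S q + q) - ud
  obtain ⟨φ, hφV, hφ⟩ := exists_mem_forall_apply_eq hcoer (innerSL ℝ e ∘L ι)
  simp only [comp_apply, innerSL_apply_apply] at hφ
  refine ⟨q, S q, φ, hmin, huniq, hSV q, hφV, hS q, hφ, fun p => ?_,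
    fun uf' φ' huf'V hφ'V huf' hφ' => ?_⟩
  · have hq := hqB p
    simp only [add_apply, smul_apply, gramForm_apply, comp_apply, innerSL_apply_apply,
      smul_eq_mul] at hq
    calc α * a q p = -⟪L q - b, L p⟫ := by rw [inner_sub_left]; linarith
      _ = -⟪e, ι p⟫ - a φ (T p) := by
        rw [← hres q, hφ _ (hTV p), show L p = ι p + ι (T p) by simp [L], inner_add_right]
        ring
      _ = a p φ - ⟪e, ι p⟫ := by rw [hsymm φ, hTa p φ hφV]; ring
  · obtain rfl : uf' = S q := eq_of_forall_apply_eq_of_mem hcoer huf'V (hSV q) fun v hv => by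
      rw [huf' v hv, hS q v hv]
    exact ⟨rfl, eq_of_forall_apply_eq_of_mem hcoer hφ'V hφV fun v hv =>
      (hφ' v hv).trans (hφ v hv).symm⟩

/-- Theorem 3.1 of the paper, KKT system.  In the abstract
Hilbert-space setting of the fourth order Dirichlet boundary control problem
(`Q` = admissible controls, `V` = `H²₀(Ω)`, `ι : Q ↪ L²(Ω)`,
`a(w,v) = ∫_Ω Δw Δv dx`, data `f, u_d ∈ L²(Ω)`, `α > 0`), the unique minimizer
`q` of the reduced cost, together with the optimal state `u = u_f + q` and a
unique adjoint state `φ ∈ V = H²₀(Ω)`, satisfies the optimality (KKT) system: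
`a(u_f,v) = (f,v) − a(q,v)` ∀ `v ∈ V`, `a(φ,v) = (u − u_d, v)` ∀ `v ∈ V`,
`α a(q,p) = a(p,φ) − (u − u_d, p)` ∀ `p ∈ Q`. -/
theorem KKT_optimality_system
    {Q F : Type*} [NormedAddCommGroup Q] [InnerProductSpace ℝ Q] [CompleteSpace Q]
    [NormedAddCommGroup F] [InnerProductSpace ℝ F] [CompleteSpace F]
    (V : Submodule ℝ Q) (hVclosed : IsClosed (V : Set Q))
    (ι : Q →L[ℝ] F) (hι : Function.Injective ι)
    (a : Q →L[ℝ] Q →L[ℝ] ℝ)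
    (hsymm : ∀ p q : Q, a p q = a q p)
    (hpos : ∀ p : Q, 0 ≤ a p p)
    (hcoer : ∃ c > 0, ∀ v ∈ V, c * ‖v‖^2 ≤ a v v)
    (hnorm : ∃ c > 0, ∀ p : Q, c * ‖p‖^2 ≤ a p p + ‖ι p‖^2)
    (f ud : F) (α : ℝ) (hα : 0 < α)
    (S : Q → Q) (hSV : ∀ p, S p ∈ V)
    (hS : ∀ p : Q, ∀ v ∈ V, a (S p) v = (inner ℝ f (ι v) : ℝ) - a p v)
    (j : Q → ℝ)
    (hj : ∀ p : Q, j p = (1/2) * ‖ι (S p + p) - ud‖^2 + (α/2) * a p p) :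
    ∃ (q uf φ : Q),
      (∀ p : Q, j q ≤ j p) ∧ (∀ q' : Q, (∀ p : Q, j q' ≤ j p) → q' = q) ∧
      uf ∈ V ∧ φ ∈ V ∧
      (∀ v ∈ V, a uf v = (inner ℝ f (ι v) : ℝ) - a q v) ∧
      (∀ v ∈ V, a φ v = (inner ℝ (ι (uf + q) - ud) (ι v) : ℝ)) ∧
      (∀ p : Q, α * a q p = a p φ - (inner ℝ (ι (uf + q) - ud) (ι p) : ℝ)) ∧
      (∀ uf' φ' : Q, uf' ∈ V → φ' ∈ V →
        (∀ v ∈ V, a uf' v = (inner ℝ f (ι v) : ℝ) - a q v) →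
        (∀ v ∈ V, a φ' v = (inner ℝ (ι (uf' + q) - ud) (ι v) : ℝ)) →
        uf' = uf ∧ φ' = φ) :=
  KKT_optimality_system_general V hVclosed ι a hsymm hpos hcoer hnorm f ud α hα S hSV hS j hj
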